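/- Let C be a linear code over 𝔽_q of length n that is closed under the left polycyclic shift with respect to v = (0, 0, ..., 0, a^{-1}) where a ∈ 𝔽_q is nonzero. Then C is a-constacyclic: for every (c₀, ..., c_{n-1}) ∈ C, the vector (a·c_{n-1}, c₀, ..., c_{n-2}) is also in C. -/
import Mathlib


/-- A linear code of length `n+1` closed under the left polycyclic shift with respect to
`v = (0,…,0,a⁻¹)`, with `a ≠ 0`, is `a`-constacyclic. -/
theorem left_polycyclic_wrt_00ainv_is_constacyclic
    {F : Type*} [Field F] [Fintype F] (n : ℕ) (a : F) (ha : a ≠ 0)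
    (C : Submodule F (Fin (n + 1) → F))
    (h : ∀ c ∈ C, (fun j : Fin (n + 1) =>
        (if hj : (j : ℕ) = n then 0 else c ⟨(j : ℕ) + 1, by have := j.isLt; omega⟩)
          + c 0 * (if j = Fin.last n then a⁻¹ else 0)) ∈ C) :
    ∀ c ∈ C, (fun j : Fin (n + 1) =>
        if hj : (j : ℕ) = 0 then a * c (Fin.last n)
        else c ⟨(j : ℕ) - 1, lt_of_le_of_lt (Nat.sub_le _ _) j.isLt⟩) ∈ C := by
  classical
  set L : (Fin (n + 1) → F) → (Fin (n + 1) → F) := fun c j =>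
    (if hj : (j : ℕ) = n then 0 else c ⟨(j : ℕ) + 1, by have := j.isLt; omega⟩)
      + c 0 * (if j = Fin.last n then a⁻¹ else 0) with hLdef
  have hL : ∀ c ∈ C, L c ∈ C := h
  set φ : C → C := fun x => ⟨L x.1, hL x.1 x.2⟩ with hφdef
  have hlast : ∀ c : Fin (n + 1) → F, L c (Fin.last n) = c 0 * a⁻¹ := by
    intro c
    simp [hLdef, Fin.last]
  have hmid : ∀ (c : Fin (n + 1) → F) (k : ℕ) (hk : k < n),
      L c ⟨k, by omega⟩ = c ⟨k + 1, by omega⟩ := by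
    intro c k hk
    have h1 : (⟨k, by omega⟩ : Fin (n + 1)) ≠ Fin.last n := by
      simp [Fin.ext_iff, Fin.last]; omega
    simp [hLdef, Nat.ne_of_lt hk, h1]
  have hinj : Function.Injective φ := by
    rintro ⟨x, hx⟩ ⟨y, hy⟩ hxy
    have hxy' : L x = L y := congrArg Subtype.val hxy
    have h0 : x 0 = y 0 := by
      have := (hlast x).symm.trans ((congrFun hxy' (Fin.last n)).trans (hlast y))
      exact mul_right_cancel₀ (inv_ne_zero ha) this
    ext j
    rcases Nat.eq_zero_or_pos j.val with h1 | h1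
    · have : j = 0 := Fin.ext h1
      simpa [this] using h0
    · have hk : (j : ℕ) - 1 < n := by have := j.isLt; omega
      have := (hmid x _ hk).symm.trans
        ((congrFun hxy' ⟨(j : ℕ) - 1, by omega⟩).trans (hmid y _ hk))
      have hj : (⟨(j : ℕ) - 1 + 1, by omega⟩ : Fin (n + 1)) = j := by
        simp [Fin.ext_iff]; omega
      rwa [hj] at this
  have hsurj : Function.Surjective φ := Finite.injective_iff_surjective.mp hinj
  intro c hc
  obtain ⟨d, hd⟩ := hsurj ⟨c, hc⟩
  have hd' : L d.1 = c := congrArg Subtype.val hd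
  have : (fun j : Fin (n + 1) =>
      if hj : (j : ℕ) = 0 then a * c (Fin.last n)
      else c ⟨(j : ℕ) - 1, lt_of_le_of_lt (Nat.sub_le _ _) j.isLt⟩) = d.1 := by
    funext j
    rcases Nat.eq_zero_or_pos j.val with h1 | h1
    · have hj0 : j = 0 := Fin.ext h1
      have : c (Fin.last n) = d.1 0 * a⁻¹ := by rw [← hd']; exact hlast d.1
      simp only [hj0, this]
      rw [dif_pos (by simp)]
      field_simp
    · have hk : (j : ℕ) - 1 < n := by have := j.isLt; omega
      rw [dif_neg (by omega)]
      have := (hmid d.1 _ hk)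
      have hj : (⟨(j : ℕ) - 1 + 1, by omega⟩ : Fin (n + 1)) = j := by
        simp [Fin.ext_iff]; omega
      rw [hj] at this
      rw [← hd']
      exact this
  rw [this]
  exact d.2
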